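/- Let d, m ≥ 1, let V, W : ℂ^d → ℂ^m be complex matrices that are isometries (V†V = W†W = 1_d), and let ζ be a d×d positive semidefinite matrix with Tr ζ = 1. Then ‖VζV† − WζW†‖₁ ≤ 2‖V − W‖_op. -/

import Mathlib

noncomputable section
open scoped Kronecker Matrix ComplexOrder
open MeasureTheory

namespace Stmt

instance {m n : Type*} : MeasurableSpace (Matrix m n ℂ) := by unfold Matrix; infer_instance

/-- Trace norm `‖X‖₁ = Tr √(XᴴX)` (sum of singular values). -/
def traceNorm {m n : Type*} [Fintype m] [Fintype n] [DecidableEq n] (X : Matrix m n ℂ) : ℝ :=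
  (let hA := (Matrix.posSemidef_conjTranspose_mul_self X).1;
    (hA.eigenvectorUnitary : Matrix n n ℂ) *
      Matrix.diagonal (fun i => ((Real.sqrt (hA.eigenvalues i) : ℝ) : ℂ)) *
      (star hA.eigenvectorUnitary : Matrix n n ℂ)).trace.re

/-- ℓ²→ℓ² operator norm of a matrix (largest singular value). -/
def opNorm {m n : Type*} [Fintype m] [Fintype n] [DecidableEq n] (X : Matrix m n ℂ) : ℝ :=
  ‖LinearMap.toContinuousLinearMap (Matrix.toEuclideanLin X)‖

/-- Frobenius norm `‖X‖₂ = √(Tr(XᴴX))`. -/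
def frobNorm {m n : Type*} [Fintype m] [Fintype n] (X : Matrix m n ℂ) : ℝ :=
  Real.sqrt ((Xᴴ * X).trace.re)

/-- Projector `|Ψ⟩⟨Ψ|` onto the maximally entangled unit vector
`|Ψ⟩ = (1/√d) ∑ᵢ |i⟩⊗|i⟩`. -/
def Psi (d : ℕ) : Matrix (Fin d × Fin d) (Fin d × Fin d) ℂ :=
  fun p q => if p.1 = p.2 ∧ q.1 = q.2 then (1 / (d : ℂ)) else 0

/-- Partial trace over the environment (last) factor `E`. -/
def ptrE {A A' B E : Type*} [Fintype E] (M : Matrix (A × B × E) (A' × B × E) ℂ) :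
    Matrix (A × B) (A' × B) ℂ :=
  fun x y => ∑ e, M (x.1, x.2, e) (y.1, y.2, e)

/-- Partial trace over the last factor `E` of a fourfold product. -/
def ptrE4 {A F B E : Type*} [Fintype E]
    (M : Matrix (A × F × B × E) (A × F × B × E) ℂ) : Matrix (A × F × B) (A × F × B) ℂ :=
  fun x y => ∑ e, M (x.1, x.2.1, x.2.2, e) (y.1, y.2.1, y.2.2, e)

/-- Partial trace over the first factor `F`. -/
def ptrF {F X Y : Type*} [Fintype F] (M : Matrix (F × X) (F × Y) ℂ) : Matrix X Y ℂ :=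
  fun x y => ∑ f, M (f, x) (f, y)

/-- Partial trace over the second factor. -/
def ptrSecond {F X : Type*} [Fintype X] (M : Matrix (F × X) (F × X) ℂ) : Matrix F F ℂ :=
  fun f f' => ∑ x, M (f, x) (f', x)

/-- The diagonal matrix `O = ε·diag(e^{iθ}, e^{−iθ}, …)` (last entry `0` if `d` is odd). -/
def Omat (d : ℕ) (ε θ : ℝ) : Matrix (Fin d) (Fin d) ℂ :=
  Matrix.diagonal fun j =>
    if Odd d ∧ (j : ℕ) = d - 1 then 0
    else if Even (j : ℕ) then (ε : ℂ) * Complex.exp (Complex.I * (θ : ℂ))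
    else (ε : ℂ) * Complex.exp (-(Complex.I * (θ : ℂ)))

/-- The traceless version `Ō = O − (Tr O / d)·1`. -/
def Obar (d : ℕ) (ε θ : ℝ) : Matrix (Fin d) (Fin d) ℂ :=
  Omat d ε θ - ((Omat d ε θ).trace / (d : ℂ)) • 1

/-- Identification of `B × E` indices with `Fin (r·d_B)`. -/
def idxBE {d_B r : ℕ} (p : Fin d_B × Fin r) : Fin (r * d_B) :=
  finCongr (Nat.mul_comm d_B r) (finProdFinEquiv p)

/-- Reindex the rows of a square matrix on `ℂ^{r·d_B}` so that it becomes a map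
`ℂ^{r d_B} → ℂ^{d_B}⊗ℂ^{r}`. -/
def toBE {d_B r : ℕ} (M : Matrix (Fin (r * d_B)) (Fin (r * d_B)) ℂ) :
    Matrix (Fin d_B × Fin r) (Fin (r * d_B)) ℂ :=
  fun p a => M (idxBE p) a

/-- `Ψ` with its second (column) tensor factor reindexed as `B × E`. -/
def PsiBE (d_B r : ℕ) :
    Matrix (Fin (r * d_B) × Fin (r * d_B)) (Fin (r * d_B) × (Fin d_B × Fin r)) ℂ :=
  fun p q => Psi (r * d_B) p (q.1, idxBE q.2)

/-- The inclusion `S` of the first `d_A` standard basis vectors of `ℂ^{d_B}⊗ℂ^{r}`. -/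
def Smat (d_A d_B r : ℕ) : Matrix (Fin d_B × Fin r) (Fin d_A) ℂ :=
  fun p a => if ((finProdFinEquiv p : Fin (d_B * r)) : ℕ) = (a : ℕ) then 1 else 0

/-- `V = √(1−ε²)·|0⟩_F ⊗ V₀ + ε·|1⟩_F ⊗ V₁`. -/
def Vfull {d_A d_B r : ℕ} (ε : ℝ) (V0 VU : Matrix (Fin d_B × Fin r) (Fin d_A) ℂ) :
    Matrix (Fin 2 × Fin d_B × Fin r) (Fin d_A) ℂ :=
  fun p a =>
    (if p.1 = 0 then (Real.sqrt (1 - ε ^ 2) : ℂ) * V0 p.2 a else 0) +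
    (if p.1 = 1 then (ε : ℂ) * VU p.2 a else 0)

/-- Kraus operator `K_i = (1 ⊗ ⟨i|_E) V₀`. -/
def Kraus {d_A d_B r : ℕ} (V0 : Matrix (Fin d_B × Fin r) (Fin d_A) ℂ) (i : Fin r) :
    Matrix (Fin d_B) (Fin d_A) ℂ :=
  fun b a => V0 (b, i) a

/-- `V_U = U(1+O)U†` regarded as a map `ℂ^{r d_B} → ℂ^{d_B}⊗ℂ^{r}`. -/
def Veq (d_B r : ℕ) (ε θ : ℝ) (U : Matrix (Fin (r * d_B)) (Fin (r * d_B)) ℂ) :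
    Matrix (Fin d_B × Fin r) (Fin (r * d_B)) ℂ :=
  toBE (U * (1 + Omat (r * d_B) ε θ) * Uᴴ)

/-- Choi state `J_U = Tr_E[(1 ⊗ V_U) Ψ (1 ⊗ V_U)†]` in the case `d_A = r·d_B`. -/
def Jeq (d_B r : ℕ) (ε θ : ℝ) (U : Matrix (Fin (r * d_B)) (Fin (r * d_B)) ℂ) :
    Matrix (Fin (r * d_B) × Fin d_B) (Fin (r * d_B) × Fin d_B) ℂ :=
  ptrE (((1 : Matrix (Fin (r * d_B)) (Fin (r * d_B)) ℂ) ⊗ₖ Veq d_B r ε θ U) * Psi (r * d_B) *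
    ((1 : Matrix (Fin (r * d_B)) (Fin (r * d_B)) ℂ) ⊗ₖ Veq d_B r ε θ U)ᴴ)

/-- Choi state `J_U = Tr_E[(1 ⊗ V_U) Ψ (1 ⊗ V_U)†]` in the case `d_A ≤ r·d_B`. -/
def Jle (d_A d_B r : ℕ) (ε : ℝ) (V0 : Matrix (Fin d_B × Fin r) (Fin d_A) ℂ)
    (U : Matrix (Fin d_B × Fin r) (Fin d_B × Fin r) ℂ) :
    Matrix (Fin d_A × Fin 2 × Fin d_B) (Fin d_A × Fin 2 × Fin d_B) ℂ :=
  ptrE4 (((1 : Matrix (Fin d_A) (Fin d_A) ℂ) ⊗ₖ Vfull ε V0 (U * Smat d_A d_B r)) * Psi d_A *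
    ((1 : Matrix (Fin d_A) (Fin d_A) ℂ) ⊗ₖ Vfull ε V0 (U * Smat d_A d_B r))ᴴ)

/-- `C = Tr_E[(1 ⊗ Ṽ₀) Ψ (1 ⊗ (Ṽ_{U₁} − Ṽ_{U₂}))†]`. -/
def Cmat (d_A d_B r : ℕ) (V0 : Matrix (Fin d_B × Fin r) (Fin d_A) ℂ)
    (U₁ U₂ : Matrix (Fin d_B × Fin r) (Fin d_B × Fin r) ℂ) :
    Matrix (Fin d_A × Fin d_B) (Fin d_A × Fin d_B) ℂ :=
  ptrE (((1 : Matrix (Fin d_A) (Fin d_A) ℂ) ⊗ₖ V0) * Psi d_A *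
    ((1 : Matrix (Fin d_A) (Fin d_A) ℂ) ⊗ₖ (U₁ * Smat d_A d_B r - U₂ * Smat d_A d_B r))ᴴ)

/-- `A_U = Tr_E[(1 ⊗ U Ō U†) Ψ]`. -/
def Amat (d_B r : ℕ) (ε θ : ℝ) (U : Matrix (Fin (r * d_B)) (Fin (r * d_B)) ℂ) :
    Matrix (Fin (r * d_B) × Fin d_B) (Fin (r * d_B) × Fin d_B) ℂ :=
  ptrE (((1 : Matrix (Fin (r * d_B)) (Fin (r * d_B)) ℂ) ⊗ₖ toBE (U * Obar (r * d_B) ε θ * Uᴴ)) *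
    PsiBE d_B r)

section AuxStmt0
open Matrix
variable {k l : ℕ}
def enorm {k : ℕ} (x : Fin k → ℂ) : ℝ := ‖((WithLp.equiv 2 (Fin k → ℂ)).symm x : EuclideanSpace ℂ (Fin k))‖

lemma enorm_nonneg (x : Fin k → ℂ) : 0 ≤ enorm x := norm_nonneg _

lemma inner_eq (x y : Fin k → ℂ) :
    (inner ℂ ((WithLp.equiv 2 (Fin k → ℂ)).symm x) ((WithLp.equiv 2 (Fin k → ℂ)).symm y) : ℂ)
      = star x ⬝ᵥ y := by
  simp [PiLp.inner_apply, WithLp.equiv_symm_apply, dotProduct, RCLike.inner_apply, mul_comm]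

lemma enorm_sq (x : Fin k → ℂ) : enorm x ^ 2 = (star x ⬝ᵥ x).re := by
  rw [← inner_eq x x, enorm]
  exact (inner_self_eq_norm_sq (𝕜 := ℂ) _).symm

lemma enorm_CS (y z : Fin k → ℂ) : ‖star y ⬝ᵥ z‖ ≤ enorm y * enorm z := by
  rw [← inner_eq y z]
  exact norm_inner_le_norm _ _

lemma quad' (M : Matrix (Fin k) (Fin l) ℂ) (x : Fin l → ℂ) (w : Fin k → ℂ) :
    star (M *ᵥ x) ⬝ᵥ w = star x ⬝ᵥ (Mᴴ *ᵥ w) := by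
  rw [star_mulVec, ← dotProduct_mulVec]





lemma enorm_mulVec_le (M : Matrix (Fin k) (Fin l) ℂ) (x : Fin l → ℂ) :
    enorm (M *ᵥ x) ≤ opNorm M * enorm x := by
  have h := (LinearMap.toContinuousLinearMap (Matrix.toEuclideanLin M)).le_opNorm
    ((WithLp.equiv 2 (Fin l → ℂ)).symm x)
  simpa [enorm, opNorm, WithLp.equiv_symm_apply, Matrix.toEuclideanLin_apply_piLp_toLp] using h

lemma enorm_isometry {M : Matrix (Fin k) (Fin l) ℂ} (h : Mᴴ * M = 1) (x : Fin l → ℂ) :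
    enorm (M *ᵥ x) = enorm x := by
  have h2 : enorm (M *ᵥ x) ^ 2 = enorm x ^ 2 := by
    rw [enorm_sq, enorm_sq, quad', mulVec_mulVec, h, one_mulVec]
  have := congrArg Real.sqrt h2
  rwa [Real.sqrt_sq (enorm_nonneg _), Real.sqrt_sq (enorm_nonneg _)] at this

lemma trace_mul_diag (A : Matrix (Fin k) (Fin k) ℂ) (f : Fin k → ℂ) :
    (A * Matrix.diagonal f).trace = ∑ i, f i * A i i := by
  simp [Matrix.trace, Matrix.diag_apply, Matrix.mul_apply, Matrix.diagonal_apply, mul_ite,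
    mul_zero, Finset.sum_ite_eq', mul_comm]

lemma conj_entry (M Q : Matrix (Fin k) (Fin k) ℂ) (i : Fin k) :
    (Qᴴ * M * Q) i i = star (fun j => Q j i) ⬝ᵥ (M *ᵥ fun j => Q j i) := by
  simp only [Matrix.mul_apply, conjTranspose_apply, dotProduct, mulVec, Pi.star_apply,
    Finset.sum_mul, Finset.mul_sum]
  rw [Finset.sum_comm]
  exact Finset.sum_congr rfl (fun x _ => Finset.sum_congr rfl (fun j _ => by ring))

/-- trace expansion against a spectrally decomposed matrix -/
lemma trace_expand (M Q : Matrix (Fin k) (Fin k) ℂ) (f : Fin k → ℂ) :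
    (M * (Q * Matrix.diagonal f * Qᴴ)).trace
      = ∑ i, f i * (star (fun j => Q j i) ⬝ᵥ (M *ᵥ fun j => Q j i)) := by
  rw [show M * (Q * Matrix.diagonal f * Qᴴ) = (M * Q * Matrix.diagonal f) * Qᴴ by
      simp [mul_assoc], Matrix.trace_mul_comm,
    show Qᴴ * (M * Q * Matrix.diagonal f) = (Qᴴ * M * Q) * Matrix.diagonal f by simp [mul_assoc],
    trace_mul_diag]
  exact Finset.sum_congr rfl fun i _ => by rw [conj_entry]






set_option maxHeartbeats 1000000 in
lemma polar (X : Matrix (Fin k) (Fin k) ℂ) :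
    ∃ P : Matrix (Fin k) (Fin k) ℂ,
      (∀ x, enorm (P *ᵥ x) ≤ enorm x) ∧
      ((Pᴴ * X).trace = (((Matrix.posSemidef_conjTranspose_mul_self X).1.eigenvectorUnitary :
        Matrix (Fin k) (Fin k) ℂ) * Matrix.diagonal (fun i => ((Real.sqrt
          ((Matrix.posSemidef_conjTranspose_mul_self X).1.eigenvalues i) : ℝ) : ℂ)) *
        (star (Matrix.posSemidef_conjTranspose_mul_self X).1.eigenvectorUnitary :
          Matrix (Fin k) (Fin k) ℂ)).trace) := by
  have hX := Matrix.posSemidef_conjTranspose_mul_self X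
  have hSh : (Xᴴ * X).IsHermitian := hX.1
  set Q : Matrix (Fin k) (Fin k) ℂ := (hSh.eigenvectorUnitary : Matrix (Fin k) (Fin k) ℂ)
    with hQdef
  set μ : Fin k → ℝ := fun i => Real.sqrt (hSh.eigenvalues i) with hμdef
  set g : Fin k → ℂ := fun i => (μ i : ℂ) with hgdef
  set S : Matrix (Fin k) (Fin k) ℂ := Q * Matrix.diagonal g * Qᴴ with hSdef
  have hQl : Qᴴ * Q = 1 := by
    simpa [Matrix.star_eq_conjTranspose] using
      (Matrix.mem_unitaryGroup_iff'.mp hSh.eigenvectorUnitary.2)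
  have hQr : Q * Qᴴ = 1 := by
    simpa [Matrix.star_eq_conjTranspose] using
      (Matrix.mem_unitaryGroup_iff.mp hSh.eigenvectorUnitary.2)
  have hcanc : ∀ t : Matrix (Fin k) (Fin k) ℂ, Qᴴ * (Q * t) = t := fun t => by
    rw [← mul_assoc, hQl, one_mul]
  have hspec : S = Q * Matrix.diagonal g * Qᴴ := by
    rfl
  set dinv : Fin k → ℂ := fun i => if μ i = 0 then 0 else ((μ i : ℂ))⁻¹ with hdinvdef
  set P : Matrix (Fin k) (Fin k) ℂ := X * Q * Matrix.diagonal dinv * Qᴴ with hPdef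
  have hdstar : star dinv = dinv := funext fun i => by
    by_cases h : μ i = 0 <;>
      simp [hdinvdef, h, ← Complex.ofReal_inv, Complex.conj_ofReal]
  have hXX : Xᴴ * X = Q * (Matrix.diagonal (fun i => g i * g i) * Qᴴ) := by
    have hev : (fun i => g i * g i) = Complex.ofReal ∘ hSh.eigenvalues := funext fun i => by
      simp only [hgdef, hμdef, Function.comp_apply, ← Complex.ofReal_mul]
      rw [Real.mul_self_sqrt (Matrix.PosSemidef.eigenvalues_nonneg hX i)]
    rw [hev, ← mul_assoc]
    exact hSh.spectral_theorem
  have hPH : Pᴴ = Q * (Matrix.diagonal dinv * (Qᴴ * Xᴴ)) := by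
    rw [hPdef]
    simp only [Matrix.conjTranspose_mul, Matrix.diagonal_conjTranspose, hdstar,
      Matrix.conjTranspose_conjTranspose, mul_assoc]
  have hPHX : Pᴴ * X = Q * (Matrix.diagonal (fun i => dinv i * (g i * g i)) * Qᴴ) := by
    rw [hPH]
    simp only [mul_assoc]
    rw [hXX, hcanc, ← mul_assoc (Matrix.diagonal dinv), Matrix.diagonal_mul_diagonal]
  have trQ : ∀ f : Fin k → ℂ, (Q * (Matrix.diagonal f * Qᴴ)).trace = ∑ i, f i := by
    intro f
    rw [← mul_assoc, Matrix.trace_mul_cycle, hQl, one_mul, Matrix.trace_diagonal]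
  have htr : (Pᴴ * X).trace = S.trace := by
    rw [hPHX, hspec, mul_assoc, trQ, trQ]
    refine Finset.sum_congr rfl fun i _ => ?_
    by_cases h : μ i = 0
    · simp [hdinvdef, hgdef, h]
    · have hne : (μ i : ℂ) ≠ 0 := Complex.ofReal_ne_zero.mpr h
      rw [hdinvdef, hgdef]
      simp only [if_neg h]
      field_simp
  have hPP : Pᴴ * P = Q * (Matrix.diagonal (fun i => dinv i * (g i * g i) * dinv i) * Qᴴ) := by
    have h1 : Pᴴ * P = (Pᴴ * X) * (Q * (Matrix.diagonal dinv * Qᴴ)) := by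
      rw [hPdef]; simp only [mul_assoc]
    rw [h1, hPHX]
    simp only [mul_assoc]
    rw [hcanc, ← mul_assoc (Matrix.diagonal (fun i => dinv i * (g i * g i))),
      Matrix.diagonal_mul_diagonal]
    rw [show (fun i => dinv i * (g i * (g i * dinv i))) = fun i => dinv i * (g i * g i) * dinv i
      from funext fun i => by ring]
  refine ⟨P, fun x => ?_, htr.trans rfl⟩
  have hQHiso : ∀ y : Fin k → ℂ, enorm (Qᴴ *ᵥ y) = enorm y := fun y =>
    enorm_isometry (by rw [Matrix.conjTranspose_conjTranspose, hQr]) y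
  have key : enorm (P *ᵥ x) ^ 2 ≤ enorm x ^ 2 := by
    rw [enorm_sq, quad', Matrix.mulVec_mulVec, hPP]
    rw [show (Q * (Matrix.diagonal (fun i => dinv i * (g i * g i) * dinv i) * Qᴴ)) *ᵥ x
        = Q *ᵥ (Matrix.diagonal (fun i => dinv i * (g i * g i) * dinv i) *ᵥ (Qᴴ *ᵥ x)) by
      simp only [← Matrix.mulVec_mulVec]]
    rw [show star x ⬝ᵥ (Q *ᵥ (Matrix.diagonal (fun i => dinv i * (g i * g i) * dinv i) *ᵥ (Qᴴ *ᵥ x)))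
        = star (Qᴴ *ᵥ x) ⬝ᵥ (Matrix.diagonal (fun i => dinv i * (g i * g i) * dinv i) *ᵥ (Qᴴ *ᵥ x)) by
      rw [quad', Matrix.conjTranspose_conjTranspose]]
    set y := Qᴴ *ᵥ x with hy
    rw [show enorm x ^ 2 = (star y ⬝ᵥ y).re by rw [← hQHiso x, enorm_sq]]
    simp only [dotProduct, Matrix.mulVec_diagonal, Pi.star_apply, Complex.re_sum]
    refine Finset.sum_le_sum fun i _ => ?_
    by_cases h : μ i = 0
    · have h0 : dinv i * (g i * g i) * dinv i = 0 := by simp [hdinvdef, h]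
      rw [show star (y i) * (dinv i * (g i * g i) * dinv i * y i) = 0 by rw [h0]; ring]
      simp only [Complex.zero_re]
      simp only [RCLike.star_def, Complex.mul_re, Complex.conj_re, Complex.conj_im]
      nlinarith [sq_nonneg (y i).re, sq_nonneg (y i).im]
    · have hne : (μ i : ℂ) ≠ 0 := Complex.ofReal_ne_zero.mpr h
      have h1 : dinv i * (g i * g i) * dinv i = 1 := by
        rw [hdinvdef, hgdef]
        simp only [if_neg h]
        field_simp
      rw [h1, one_mul]
  exact le_of_pow_le_pow_left₀ (by norm_num) (enorm_nonneg x) key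






end AuxStmt0

/-- If `V, W : ℂ^d → ℂ^m` are isometries and `ζ` is a state, then
`‖VζV† − WζW†‖₁ ≤ 2‖V − W‖_op`. -/
theorem stmt_0 (d m : ℕ) (hd : 1 ≤ d) (hm : 1 ≤ m)
    (V W : Matrix (Fin m) (Fin d) ℂ) (hV : Vᴴ * V = 1) (hW : Wᴴ * W = 1)
    (ζ : Matrix (Fin d) (Fin d) ℂ) (hζ : ζ.PosSemidef) (hζtr : ζ.trace = 1) :
    traceNorm (V * ζ * Vᴴ - W * ζ * Wᴴ) ≤ 2 * opNorm (V - W) := by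
  classical
  set X : Matrix (Fin m) (Fin m) ℂ := V * ζ * Vᴴ - W * ζ * Wᴴ with hXdef
  obtain ⟨P, hPc, hPtr⟩ := polar X
  have htn : traceNorm X = ((Pᴴ * X).trace).re := by rw [hPtr]; rfl
  -- spectral decomposition of ζ
  have hζh : ζ.IsHermitian := hζ.1
  set Q2 : Matrix (Fin d) (Fin d) ℂ := (hζh.eigenvectorUnitary : Matrix (Fin d) (Fin d) ℂ)
    with hQ2def
  set lam : Fin d → ℝ := hζh.eigenvalues with hlamdef
  have hlam0 : ∀ i, 0 ≤ lam i := fun i => hζ.eigenvalues_nonneg i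
  have hQ2l : Q2ᴴ * Q2 = 1 := by
    simpa [Matrix.star_eq_conjTranspose] using
      (Matrix.mem_unitaryGroup_iff'.mp hζh.eigenvectorUnitary.2)
  have hspecζ : ζ = Q2 * Matrix.diagonal (fun i => (lam i : ℂ)) * Q2ᴴ := by
    exact hζh.spectral_theorem
  set v : Fin d → (Fin d → ℂ) := fun i => (fun j => Q2 j i) with hvdef
  have hvnorm : ∀ i, enorm (v i) = 1 := by
    intro i
    have e1 : star (v i) ⬝ᵥ (v i) = (Q2ᴴ * Q2) i i := by
      simp [dotProduct, Matrix.mul_apply, Matrix.conjTranspose_apply, hvdef]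
    have h2 : enorm (v i) ^ 2 = 1 := by
      rw [enorm_sq, e1, hQ2l]
      simp [Matrix.one_apply]
    have := congrArg Real.sqrt h2
    rwa [Real.sqrt_sq (enorm_nonneg _), Real.sqrt_one] at this
  have hlamsum : ∑ i, lam i = 1 := by
    have h1 : (∑ i, (lam i : ℂ)) = 1 := by
      have : ζ.trace = ∑ i, (lam i : ℂ) := by
        rw [hspecζ, Matrix.trace_mul_cycle, hQ2l, one_mul, Matrix.trace_diagonal]
      rw [← this, hζtr]
    exact_mod_cast h1
  -- trace expansion
  have expand : ∀ M : Matrix (Fin m) (Fin m) ℂ, ∀ Y : Matrix (Fin m) (Fin d) ℂ,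
      (M * (Y * ζ * Yᴴ)).trace
        = ∑ i, (lam i : ℂ) * (star (Y *ᵥ v i) ⬝ᵥ (M *ᵥ (Y *ᵥ v i))) := by
    intro M Y
    have e1 : M * (Y * ζ * Yᴴ) = M * (Y * ζ) * Yᴴ := by rw [← Matrix.mul_assoc]
    rw [e1, Matrix.trace_mul_comm]
    have e2 : Yᴴ * (M * (Y * ζ)) = Yᴴ * (M * Y) * ζ := by
      rw [← Matrix.mul_assoc, ← Matrix.mul_assoc, Matrix.mul_assoc Yᴴ M Y]
    rw [e2, hspecζ, trace_expand]
    have hviden : ∀ i : Fin d, (fun j => Q2 j i) = v i := fun i => rfl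
    simp only [hviden]
    refine Finset.sum_congr rfl fun i _ => ?_
    congr 1
    rw [quad' Y (v i) (M *ᵥ (Y *ᵥ v i)), Matrix.mulVec_mulVec, Matrix.mulVec_mulVec,
      ← Matrix.mul_assoc]
  have hsplit : ((Pᴴ * X).trace).re
      = ∑ i, lam i * (star (V *ᵥ v i) ⬝ᵥ (Pᴴ *ᵥ (V *ᵥ v i))
          - star (W *ᵥ v i) ⬝ᵥ (Pᴴ *ᵥ (W *ᵥ v i))).re := by
    have : Pᴴ * X = Pᴴ * (V * ζ * Vᴴ) - Pᴴ * (W * ζ * Wᴴ) := by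
      rw [hXdef, mul_sub]
    rw [this, Matrix.trace_sub, expand Pᴴ V, expand Pᴴ W, ← Finset.sum_sub_distrib,
      Complex.re_sum]
    refine Finset.sum_congr rfl fun i _ => ?_
    rw [← mul_sub, Complex.re_ofReal_mul]
  -- per-term bound
  have hper : ∀ i, (star (V *ᵥ v i) ⬝ᵥ (Pᴴ *ᵥ (V *ᵥ v i))
      - star (W *ᵥ v i) ⬝ᵥ (Pᴴ *ᵥ (W *ᵥ v i))).re ≤ 2 * opNorm (V - W) := by
    intro i
    set a := V *ᵥ v i with hadef
    set b := W *ᵥ v i with hbdef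
    set c := (V - W) *ᵥ v i with hcdef
    have hcab : c = a - b := by rw [hcdef, Matrix.sub_mulVec]
    have ha1 : enorm a = 1 := by rw [hadef, enorm_isometry hV, hvnorm]
    have hb1 : enorm b = 1 := by rw [hbdef, enorm_isometry hW, hvnorm]
    have hcle : enorm c ≤ opNorm (V - W) := by
      calc enorm c ≤ opNorm (V - W) * enorm (v i) := enorm_mulVec_le _ _
        _ = opNorm (V - W) := by rw [hvnorm, mul_one]
    have halg : star a ⬝ᵥ (Pᴴ *ᵥ a) - star b ⬝ᵥ (Pᴴ *ᵥ b)
        = star a ⬝ᵥ (Pᴴ *ᵥ c) + star c ⬝ᵥ (Pᴴ *ᵥ b) := by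
      have h1 : Pᴴ *ᵥ c = Pᴴ *ᵥ a - Pᴴ *ᵥ b := by rw [hcab, Matrix.mulVec_sub]
      have h2 : star c = star a - star b := by rw [hcab]; ext j; simp
      rw [h1, h2, dotProduct_sub, sub_dotProduct]
      ring
    have hterm1 : ‖star a ⬝ᵥ (Pᴴ *ᵥ c)‖ ≤ enorm c := by
      rw [← quad']
      calc ‖star (P *ᵥ a) ⬝ᵥ c‖ ≤ enorm (P *ᵥ a) * enorm c := enorm_CS _ _
        _ ≤ enorm a * enorm c := mul_le_mul_of_nonneg_right (hPc a) (enorm_nonneg c)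
        _ = enorm c := by rw [ha1, one_mul]
    have hterm2 : ‖star c ⬝ᵥ (Pᴴ *ᵥ b)‖ ≤ enorm c := by
      rw [← quad']
      calc ‖star (P *ᵥ c) ⬝ᵥ b‖ ≤ enorm (P *ᵥ c) * enorm b := enorm_CS _ _
        _ ≤ enorm c * 1 := by
            rw [hb1]
            exact mul_le_mul_of_nonneg_right (hPc c) (by norm_num)
        _ = enorm c := mul_one _
    calc (star a ⬝ᵥ (Pᴴ *ᵥ a) - star b ⬝ᵥ (Pᴴ *ᵥ b)).re
        ≤ ‖star a ⬝ᵥ (Pᴴ *ᵥ a) - star b ⬝ᵥ (Pᴴ *ᵥ b)‖ :=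
          (Complex.re_le_norm _)
      _ = ‖star a ⬝ᵥ (Pᴴ *ᵥ c) + star c ⬝ᵥ (Pᴴ *ᵥ b)‖ := by rw [halg]
      _ ≤ ‖star a ⬝ᵥ (Pᴴ *ᵥ c)‖ + ‖star c ⬝ᵥ (Pᴴ *ᵥ b)‖ := norm_add_le _ _
      _ ≤ enorm c + enorm c := add_le_add hterm1 hterm2
      _ ≤ opNorm (V - W) + opNorm (V - W) := add_le_add hcle hcle
      _ = 2 * opNorm (V - W) := by ring
  -- assemble
  rw [htn, hsplit]
  calc ∑ i, lam i * (star (V *ᵥ v i) ⬝ᵥ (Pᴴ *ᵥ (V *ᵥ v i))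
          - star (W *ᵥ v i) ⬝ᵥ (Pᴴ *ᵥ (W *ᵥ v i))).re
      ≤ ∑ i, lam i * (2 * opNorm (V - W)) := by
        refine Finset.sum_le_sum fun i _ => ?_
        exact mul_le_mul_of_nonneg_left (hper i) (hlam0 i)
    _ = (∑ i, lam i) * (2 * opNorm (V - W)) := by rw [Finset.sum_mul]
    _ = 2 * opNorm (V - W) := by rw [hlamsum, one_mul]


end Stmt
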